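/- arXiv:math/0602031 — 3 statements merged into one kernel-verified Lean document; each statement's English description precedes it below -/
import Mathlib

section
/- If x^α ∈ in_≥(I) for a local monomial order ≥ with opposite global order ⪰, then no nonzero functional L ∈ D_0[I] has in_⪰(L) = α. Equivalently, in_⪰(D_0[I]) is contained in the set of exponents of standard monomials of I w.r.t. ≥. -/
/-! At the origin `Δ_γ` is the coefficient functional `f ↦ coeff γ f`, so a functional `c` pairs
with `f` as `∑ c_γ f_γ`. If `α = in_⪰(c)` is also the local initial exponent of some `g ∈ I` (take
`g = x^(α - β) f` when `β = in_≥(f)` divides `α`), every other exponent of `c` lies `G`-below `α`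
while every other exponent of `g` lies `G`-above it, so the pairing collapses to `c_α g_α ≠ 0`,
contradicting `c ∈ D_0[I]`. -/

open MvPolynomial

/-- The constant-coefficient differential operator `∂^β = ∂₁^{β₁} ⋯ ∂ₙ^{βₙ}`
acting on `ℂ[x₁,…,xₙ]`. -/
noncomputable def diffOp {n : ℕ} (β : Fin n →₀ ℕ) : Module.End ℂ (MvPolynomial (Fin n) ℂ) :=
  (List.ofFn fun i : Fin n => ((pderiv (R := ℂ) i).toLinearMap) ^ (β i)).prod

/-- The differential functional
`Δ_α(f) = (1/(α₁!⋯αₙ!)) ⋅ (∂^{|α|} f / ∂x^α) |_{x = p}`. -/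
noncomputable def DeltaAt {n : ℕ} (p : Fin n → ℂ) (α : Fin n →₀ ℕ)
    (f : MvPolynomial (Fin n) ℂ) : ℂ :=
  (∏ i : Fin n, ((α i).factorial : ℂ))⁻¹ * eval p (diffOp α f)

/-- A functional `L = Σ c_α Δ_α` (given by its finitely supported coefficient
vector `c`) applied to a polynomial `f`. -/
noncomputable def applyF {n : ℕ} (p : Fin n → ℂ) (c : (Fin n →₀ ℕ) →₀ ℂ)
    (f : MvPolynomial (Fin n) ℂ) : ℂ :=
  c.sum fun α a => a * DeltaAt p α f

/-- The local dual space `D_p[I]` of differential functionals (identified with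
their coefficient vectors) annihilating the ideal `I` at the point `p`. -/
noncomputable def dualSpace {n : ℕ} (p : Fin n → ℂ) (I : Ideal (MvPolynomial (Fin n) ℂ)) :
    Submodule ℂ ((Fin n →₀ ℕ) →₀ ℂ) :=
  ⨅ f ∈ I, LinearMap.ker (Finsupp.linearCombination ℂ (fun α => DeltaAt p α f))

/-- The total degree `|α|` of a multi-index. -/
def degOf {n : ℕ} (α : Fin n →₀ ℕ) : ℕ := α.sum fun _ k => k

/-- A global monomial order on multi-indices: a translation-invariant strict
linear order for which `0` is the smallest element. -/
structure GlobalMonomialOrder (n : ℕ) where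
  lt : (Fin n →₀ ℕ) → (Fin n →₀ ℕ) → Prop
  irrefl : ∀ a, ¬ lt a a
  trans : ∀ a b c, lt a b → lt b c → lt a c
  total : ∀ a b, a ≠ b → lt a b ∨ lt b a
  add_right : ∀ a b c, lt a b → lt (a + c) (b + c)
  zero_lt : ∀ a, a ≠ 0 → lt 0 a

/-- `m` is the `G`-maximal element of the set `s`. -/
def IsMaxOf {n : ℕ} (G : GlobalMonomialOrder n) (s : Set (Fin n →₀ ℕ)) (m : Fin n →₀ ℕ) : Prop :=
  m ∈ s ∧ ∀ a ∈ s, a = m ∨ G.lt a m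

/-- `m` is the `G`-minimal element of the set `s`. -/
def IsMinOf {n : ℕ} (G : GlobalMonomialOrder n) (s : Set (Fin n →₀ ℕ)) (m : Fin n →₀ ℕ) : Prop :=
  m ∈ s ∧ ∀ a ∈ s, a = m ∨ G.lt m a

/-- `β = in_≥(f)`: the exponent of the leading monomial of `f` with respect to
the local order `≥` opposite to the global order `G`; since the two orders are
opposite, it is the `G`-minimal element of the support of `f`. -/
def IsLocalInitialExp {n : ℕ} (G : GlobalMonomialOrder n) (f : MvPolynomial (Fin n) ℂ)
    (β : Fin n →₀ ℕ) : Prop :=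
  IsMinOf G (↑f.support) β

/-- Exponents of monomials lying in the initial ideal `in_≥(I)` with respect to
the local order opposite to `G`: those divisible by the initial exponent of
some nonzero element of `I`.  Standard monomials are exactly the monomials
whose exponents are NOT in this set. -/
def initIdealExp {n : ℕ} (G : GlobalMonomialOrder n) (I : Ideal (MvPolynomial (Fin n) ℂ)) :
    Set (Fin n →₀ ℕ) :=
  {γ | ∃ f ∈ I, f ≠ 0 ∧ ∃ β, IsLocalInitialExp G f β ∧ β ≤ γ}

/-- The initial support `in_⪰(D_p[I])` of the local dual space: the set of
`G`-initial exponents of nonzero functionals in `D_p[I]`. -/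
def initSupp {n : ℕ} (G : GlobalMonomialOrder n) (p : Fin n → ℂ)
    (I : Ideal (MvPolynomial (Fin n) ℂ)) : Set (Fin n →₀ ℕ) :=
  {β | ∃ c ∈ dualSpace p I, c ≠ 0 ∧ IsMaxOf G (↑c.support) β}

/-- `p` is an isolated solution of the system generating `I`. -/
def IsIsolatedSolution {n : ℕ} (p : Fin n → ℂ) (I : Ideal (MvPolynomial (Fin n) ℂ)) : Prop :=
  (∀ f ∈ I, eval p f = 0) ∧
    ∃ U : Set (Fin n → ℂ), IsOpen U ∧ p ∈ U ∧
      ∀ q ∈ U, (∀ f ∈ I, eval q f = 0) → q = p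

section Differentiation

variable {σ R : Type*} [CommSemiring R]

theorem pderiv_pow_monomial (i : σ) (k : ℕ) (δ : σ →₀ ℕ) (a : R) :
    ((pderiv i).toLinearMap ^ k) (monomial δ a) =
      monomial (δ - Finsupp.single i k) (a * (δ i).descFactorial k) := by
  induction k with
  | zero => simp
  | succ k ih =>
    rw [pow_succ', Module.End.mul_apply, ih, Derivation.coeFn_coe, pderiv_monomial, tsub_tsub,
      Finsupp.single_add, Finsupp.tsub_apply, Finsupp.single_eq_same, Nat.descFactorial_succ,
      Nat.cast_mul]
    congr 1
    ring

theorem list_prod_pderiv_pow_monomial (γ : σ →₀ ℕ) (a : R) {l : List σ} (hl : l.Nodup)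
    (δ : σ →₀ ℕ) :
    (l.map fun i => (pderiv i).toLinearMap ^ γ i).prod (monomial δ a) =
      monomial (δ - (l.map fun i => Finsupp.single i (γ i)).sum)
        (a * (l.map fun i => ((δ i).descFactorial (γ i) : R)).prod) := by
  induction l with
  | nil => simp
  | cons i l ih =>
    obtain ⟨hi, hl⟩ := List.nodup_cons.mp hl
    have hδi : (δ - (l.map fun j => Finsupp.single j (γ j)).sum) i = δ i := by
      have hsum : (l.map fun j => Finsupp.single j (γ j)).sum i = 0 := by
        rw [← Finsupp.applyAddHom_apply, map_list_sum, List.map_map]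
        refine List.sum_eq_zero fun x hx => ?_
        obtain ⟨j, hj, rfl⟩ := List.mem_map.mp hx
        exact Finsupp.single_eq_of_ne (fun h => hi (h ▸ hj))
      rw [Finsupp.tsub_apply, hsum, tsub_zero]
    rw [List.map_cons, List.prod_cons, Module.End.mul_apply, ih hl, pderiv_pow_monomial, hδi,
      List.map_cons, List.sum_cons, List.map_cons, List.prod_cons, tsub_tsub, add_comm]
    congr 1
    ring

end Differentiation

theorem diffOp_monomial {n : ℕ} (γ δ : Fin n →₀ ℕ) (a : ℂ) :
    diffOp γ (monomial δ a) =
      monomial (δ - γ) (a * ∏ i, ((δ i).descFactorial (γ i) : ℂ)) := by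
  rw [diffOp, List.ofFn_eq_map,
    list_prod_pderiv_pow_monomial γ a (List.nodup_finRange n), ← List.ofFn_eq_map,
    ← List.ofFn_eq_map, List.sum_ofFn, List.prod_ofFn, Finsupp.univ_sum_single]

theorem DeltaAt_zero_monomial {n : ℕ} (γ δ : Fin n →₀ ℕ) (a : ℂ) :
    DeltaAt 0 γ (monomial δ a) = if δ = γ then a else 0 := by
  have hfac : (∏ i, ((γ i).factorial : ℂ)) ≠ 0 :=
    Finset.prod_ne_zero_iff.mpr fun i _ => Nat.cast_ne_zero.mpr (Nat.factorial_ne_zero _)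
  rw [DeltaAt, diffOp_monomial, eval_zero, constantCoeff_monomial]
  split_ifs with hle hδγ hδγ
  · subst hδγ
    simp only [Nat.descFactorial_self]
    rw [mul_comm a, inv_mul_cancel_left₀ hfac]
  · obtain ⟨i, hi⟩ : ∃ i, δ i < γ i := by
      by_contra! h
      exact hδγ (le_antisymm (tsub_eq_zero_iff_le.mp hle) h)
    have hzero : ∏ j, ((δ j).descFactorial (γ j) : ℂ) = 0 :=
      Finset.prod_eq_zero (Finset.mem_univ i) (by simp [Nat.descFactorial_eq_zero_iff_lt.mpr hi])
    rw [hzero, mul_zero, mul_zero]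
  · exact absurd (by simp [hδγ]) hle
  · rw [mul_zero]

theorem DeltaAt_zero_eq_coeff {n : ℕ} (γ : Fin n →₀ ℕ) (f : MvPolynomial (Fin n) ℂ) :
    DeltaAt 0 γ f = coeff γ f := by
  induction f using MvPolynomial.induction_on' with
  | monomial δ a => rw [DeltaAt_zero_monomial, coeff_monomial]
  | add p q hp hq =>
    simp only [DeltaAt, map_add, mul_add] at hp hq ⊢
    rw [hp, hq, coeff_add]

theorem linearCombination_coeff_eq_zero_of_mem_dualSpace {n : ℕ}
    {I : Ideal (MvPolynomial (Fin n) ℂ)} {c : (Fin n →₀ ℕ) →₀ ℂ} (hc : c ∈ dualSpace 0 I)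
    {f : MvPolynomial (Fin n) ℂ} (hf : f ∈ I) :
    Finsupp.linearCombination ℂ (fun γ => coeff γ f) c = 0 := by
  have hker := (Submodule.mem_iInf _).mp ((Submodule.mem_iInf _).mp hc f) hf
  simpa only [LinearMap.mem_ker, DeltaAt_zero_eq_coeff] using hker

theorem GlobalMonomialOrder.lt_asymm {n : ℕ} (G : GlobalMonomialOrder n)
    {a b : Fin n →₀ ℕ} (hab : G.lt a b) : ¬ G.lt b a :=
  fun hba => G.irrefl a (G.trans a b a hab hba)

theorem IsLocalInitialExp.monomial_one_mul {n : ℕ} {G : GlobalMonomialOrder n}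
    {f : MvPolynomial (Fin n) ℂ} {β : Fin n →₀ ℕ} (hβ : IsLocalInitialExp G f β)
    (δ : Fin n →₀ ℕ) : IsLocalInitialExp G (monomial δ 1 * f) (β + δ) := by
  obtain ⟨hβf, hβmin⟩ := hβ
  refine ⟨?_, fun γ hγ => ?_⟩
  · rw [Finset.mem_coe, mem_support_iff, add_comm, coeff_monomial_mul, one_mul]
    exact mem_support_iff.mp hβf
  · rw [Finset.mem_coe, mem_support_iff, coeff_monomial_mul'] at hγ
    split_ifs at hγ with hδγ
    · rw [one_mul] at hγ
      have hγ' := tsub_add_cancel_of_le hδγ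
      rcases hβmin (γ - δ) (mem_support_iff.mpr hγ) with h | h
      · left; rw [← hγ', h]
      · right; simpa only [hγ'] using G.add_right β (γ - δ) δ h
    · exact absurd rfl hγ

theorem linearCombination_coeff_eq_of_isMaxOf_of_isLocalInitialExp {n : ℕ}
    {G : GlobalMonomialOrder n} {c : (Fin n →₀ ℕ) →₀ ℂ} {g : MvPolynomial (Fin n) ℂ}
    {α : Fin n →₀ ℕ} (hc : IsMaxOf G (↑c.support) α) (hg : IsLocalInitialExp G g α) :
    Finsupp.linearCombination ℂ (fun γ => coeff γ g) c = c α * coeff α g := by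
  rw [Finsupp.linearCombination_apply, Finsupp.sum, Finset.sum_eq_single α]
  · rfl
  · intro γ hγc hγα
    have hγg : coeff γ g = 0 := by
      by_contra hγg
      rcases hg.2 γ (mem_support_iff.mpr hγg) with h | h
      · exact hγα h
      · exact (hc.2 γ hγc).elim hγα (G.lt_asymm h)
    rw [hγg, smul_zero]
  · exact fun hα => absurd hc.1 hα

/-- if `x^α ∈ in_≥(I)` then no nonzero functional `L ∈ D_0[I]`
has `in_⪰(L) = α`; equivalently, `in_⪰(D_0[I])` is contained in the set of
exponents of standard monomials of `I` w.r.t. `≥`. -/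
theorem initSupp_subset_standard {n : ℕ} (G : GlobalMonomialOrder n)
    (I : Ideal (MvPolynomial (Fin n) ℂ)) :
    (∀ α ∈ initIdealExp G I,
      ¬ ∃ c ∈ dualSpace (0 : Fin n → ℂ) I, c ≠ 0 ∧ IsMaxOf G (↑c.support) α) ∧
    initSupp G 0 I ⊆ {γ : Fin n →₀ ℕ | γ ∉ initIdealExp G I} := by
  have hnot : ∀ α ∈ initIdealExp G I,
      ¬ ∃ c ∈ dualSpace (0 : Fin n → ℂ) I, c ≠ 0 ∧ IsMaxOf G (↑c.support) α := by
    rintro α ⟨f, hfI, -, β, hβ, hβα⟩ ⟨c, hc, -, hα⟩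
    have hg := hβ.monomial_one_mul (α - β)
    rw [add_tsub_cancel_of_le hβα] at hg
    have hpair := linearCombination_coeff_eq_of_isMaxOf_of_isLocalInitialExp hα hg
    rw [linearCombination_coeff_eq_zero_of_mem_dualSpace hc (I.mul_mem_left _ hfI)] at hpair
    exact mul_ne_zero (Finsupp.mem_support_iff.mp hα.1) (mem_support_iff.mp hg.1) hpair.symm
  exact ⟨hnot, fun γ ⟨c, hc, hc0, hγ⟩ hγI => hnot γ hγI ⟨c, hc, hc0, hγ⟩⟩
end

section
/- A functional L of order at most d belongs to D_0[I], I = (f_1,…,f_N), if and only if L(f_i) = 0 for all i and σ_j(L) ∈ D_0[I] for all j = 1,…,n, where σ_j is the anti-derivation operator (ST-closedness). -/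
open MvPolynomial

/-- The anti-derivation operator `σ_j` on functionals:
`σ_j(Δ_α) = Δ_{α − e_j}` if `α_j > 0` and `σ_j(Δ_α) = 0` otherwise.
On coefficient vectors, `(σ_j c)(α) = c(α + e_j)`. -/
noncomputable def sigmaOp {n : ℕ} (j : Fin n) (c : (Fin n →₀ ℕ) →₀ ℂ) :
    (Fin n →₀ ℕ) →₀ ℂ :=
  Finsupp.comapDomain (fun α => α + Finsupp.single j 1) c
    (fun _ _ _ _ h => by simpa using h)

/-!
At the origin `Δ_α` is the coefficient of `x^α`, so `L = Σ c_α Δ_α` pairs with `g` as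
`Σ c_α g_α` and `σ_j L = L(x_j ⬝ -)`. Writing `r = r(0) + (r - r(0))` with
`r - r(0) ∈ (x₁,…,xₙ)` shows that an ideal `I = (S)` is spanned by `S` together with the
products `x_j g`, `g ∈ I`; hence `L` kills `I` iff it kills `S` and every `L(x_j ⬝ -)` kills `I`.
-/

namespace MvPolynomial

section pderiv

variable {σ R : Type*} [CommSemiring R]

theorem coeff_pderiv_pow (i : σ) (k : ℕ) (m : σ →₀ ℕ) (p : MvPolynomial σ R) :
    coeff m (((pderiv i).toLinearMap ^ k) p) =
      coeff (m + Finsupp.single i k) p * ((m i + k).descFactorial k : R) := by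
  classical
  induction k generalizing p with
  | zero => simp
  | succ k ih =>
    rw [pow_succ, Module.End.mul_apply, ih, Derivation.coeFn_coe, coeff_pderiv,
      Finsupp.add_apply, Finsupp.single_eq_same, add_assoc, ← Finsupp.single_add,
      ← add_assoc, Nat.succ_descFactorial_succ]
    push_cast
    ring

theorem coeff_list_prod_pderiv_pow (α : σ →₀ ℕ) {l : List σ} (hl : l.Nodup) (m : σ →₀ ℕ)
    (p : MvPolynomial σ R) :
    coeff m ((l.map fun i => (pderiv i).toLinearMap ^ α i).prod p) =
      coeff (m + (l.map fun i => Finsupp.single i (α i)).sum) p *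
        (l.map fun i => ((m i + α i).descFactorial (α i) : R)).prod := by
  classical
  induction l generalizing m with
  | nil => simp
  | cons i t ih =>
    obtain ⟨hit, ht⟩ := List.nodup_cons.1 hl
    have hm : t.map (fun k => (((m + Finsupp.single i (α i)) k + α k).descFactorial (α k) : R)) =
        t.map fun k => ((m k + α k).descFactorial (α k) : R) :=
      List.map_congr_left fun k hk => by
        rw [Finsupp.add_apply, Finsupp.single_eq_of_ne (ne_of_mem_of_not_mem hk hit), add_zero]
    simp only [List.map_cons, List.prod_cons, List.sum_cons, Module.End.mul_apply]
    rw [coeff_pderiv_pow, ih ht, hm, add_assoc]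
    ring

end pderiv

section idealOfVars

variable {σ R M : Type*} [CommRing R] [AddCommGroup M] [Module R M]

theorem sub_C_constantCoeff_mem_idealOfVars (r : MvPolynomial σ R) :
    r - C (constantCoeff r) ∈ idealOfVars σ R := by
  classical
  rw [idealOfVars, ← Set.image_univ, mem_ideal_span_X_image]
  intro m hm
  have hm0 : m ≠ 0 := by
    rintro rfl
    simp [← constantCoeff_eq] at hm
  obtain ⟨i, hi⟩ := Finsupp.ne_iff.1 hm0
  exact ⟨i, Set.mem_univ i, hi⟩

theorem map_mul_eq_zero_of_mem_idealOfVars (ℓ : MvPolynomial σ R →ₗ[R] M)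
    {I : Ideal (MvPolynomial σ R)} (hX : ∀ i, ∀ g ∈ I, ℓ (X i * g) = 0)
    {y : MvPolynomial σ R} (hy : y ∈ idealOfVars σ R) {g : MvPolynomial σ R} (hg : g ∈ I) :
    ℓ (y * g) = 0 := by
  induction hy using Submodule.span_induction generalizing g with
  | mem y hy => obtain ⟨i, rfl⟩ := hy; exact hX i g hg
  | zero => simp
  | add y z _ _ hy hz => rw [add_mul, map_add, hy hg, hz hg, add_zero]
  | smul a y _ hy => rw [smul_eq_mul, mul_comm a, mul_assoc]; exact hy (I.mul_mem_left a hg)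

theorem forall_mem_span_map_eq_zero_iff (ℓ : MvPolynomial σ R →ₗ[R] M)
    (S : Set (MvPolynomial σ R)) :
    (∀ g ∈ Ideal.span S, ℓ g = 0) ↔
      (∀ s ∈ S, ℓ s = 0) ∧ ∀ i, ∀ g ∈ Ideal.span S, ℓ (X i * g) = 0 := by
  refine ⟨fun h => ⟨fun s hs => h s (Ideal.subset_span hs),
    fun i g hg => h _ (Ideal.mul_mem_left _ _ hg)⟩, fun ⟨hS, hX⟩ g hg => ?_⟩
  induction hg using Submodule.span_induction with
  | mem s hs => exact hS s hs
  | zero => simp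
  | add x y _ _ hx hy => rw [map_add, hx, hy, add_zero]
  | smul r x hxI hx =>
    have hsplit : r * x = constantCoeff r • x + (r - C (constantCoeff r)) * x := by
      rw [smul_eq_C_mul]; ring
    rw [smul_eq_mul, hsplit, map_add, map_smul, hx, smul_zero, zero_add]
    exact map_mul_eq_zero_of_mem_idealOfVars ℓ hX (sub_C_constantCoeff_mem_idealOfVars r) hxI

end idealOfVars

end MvPolynomial

theorem coeff_diffOp {n : ℕ} (α m : Fin n →₀ ℕ) (p : MvPolynomial (Fin n) ℂ) :
    coeff m (diffOp α p) =
      coeff (m + α) p * ∏ i, ((m i + α i).descFactorial (α i) : ℂ) := by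
  rw [diffOp, List.ofFn_eq_map, coeff_list_prod_pderiv_pow α (List.nodup_finRange n),
    ← List.ofFn_eq_map, List.sum_ofFn, Finsupp.univ_sum_single, ← List.ofFn_eq_map,
    List.prod_ofFn]

theorem deltaAt_zero {n : ℕ} (α : Fin n →₀ ℕ) (g : MvPolynomial (Fin n) ℂ) :
    DeltaAt 0 α g = coeff α g := by
  have hfac : ∏ i, ((α i).factorial : ℂ) ≠ 0 :=
    Finset.prod_ne_zero_iff.2 fun i _ => Nat.cast_ne_zero.2 (Nat.factorial_ne_zero _)
  rw [DeltaAt, eval_zero, constantCoeff_eq, coeff_diffOp, zero_add]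
  simp only [Finsupp.coe_zero, Pi.zero_apply, zero_add, Nat.descFactorial_self]
  field_simp

noncomputable def applyFₗ {n : ℕ} (p : Fin n → ℂ) (c : (Fin n →₀ ℕ) →₀ ℂ) :
    MvPolynomial (Fin n) ℂ →ₗ[ℂ] ℂ where
  toFun := applyF p c
  map_add' f g := by simp [applyF, DeltaAt, mul_add, Finsupp.sum_add]
  map_smul' a f := by simp [applyF, DeltaAt, Finsupp.mul_sum, mul_left_comm]

@[simp]
theorem applyFₗ_apply {n : ℕ} (p : Fin n → ℂ) (c : (Fin n →₀ ℕ) →₀ ℂ)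
    (g : MvPolynomial (Fin n) ℂ) : applyFₗ p c g = applyF p c g := rfl

theorem mem_dualSpace_iff {n : ℕ} (p : Fin n → ℂ) (I : Ideal (MvPolynomial (Fin n) ℂ))
    (c : (Fin n →₀ ℕ) →₀ ℂ) : c ∈ dualSpace p I ↔ ∀ g ∈ I, applyF p c g = 0 := by
  simp only [dualSpace, Submodule.mem_iInf, LinearMap.mem_ker, Finsupp.linearCombination_apply,
    applyF, smul_eq_mul]

theorem applyF_zero_monomial {n : ℕ} (c : (Fin n →₀ ℕ) →₀ ℂ) (α : Fin n →₀ ℕ) (b : ℂ) :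
    applyF 0 c (monomial α b) = c α * b := by
  classical
  simp only [applyF, deltaAt_zero, coeff_monomial, mul_ite, mul_zero, Finsupp.sum_ite_eq]
  exact ite_eq_left_iff.2 fun h => by rw [Finsupp.notMem_support_iff.1 h, zero_mul]

theorem applyF_sigmaOp {n : ℕ} (j : Fin n) (c : (Fin n →₀ ℕ) →₀ ℂ)
    (g : MvPolynomial (Fin n) ℂ) : applyF 0 (sigmaOp j c) g = applyF 0 c (X j * g) := by
  induction g using MvPolynomial.induction_on' with
  | monomial α b =>
    rw [X, monomial_mul, one_mul, add_comm, applyF_zero_monomial, applyF_zero_monomial]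
    rfl
  | add f g hf hg => simp only [← applyFₗ_apply, mul_add, map_add] at hf hg ⊢; rw [hf, hg]

theorem ST_closedness_general {n N : ℕ} (f : Fin N → MvPolynomial (Fin n) ℂ)
    (c : (Fin n →₀ ℕ) →₀ ℂ) :
    c ∈ dualSpace (0 : Fin n → ℂ) (Ideal.span (Set.range f)) ↔
      (∀ i, applyF (0 : Fin n → ℂ) c (f i) = 0) ∧
      (∀ j : Fin n, sigmaOp j c ∈ dualSpace (0 : Fin n → ℂ) (Ideal.span (Set.range f))) := by
  simp only [mem_dualSpace_iff, applyF_sigmaOp]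
  simpa only [applyFₗ_apply, Set.forall_mem_range] using
    forall_mem_span_map_eq_zero_iff (applyFₗ 0 c) (Set.range f)

/-- ST-closedness: a functional `L` of order at most `d` belongs
to `D_0[I]`, `I = (f₁,…,f_N)`, if and only if `L(f_i) = 0` for all `i` and
`σ_j(L) ∈ D_0[I]` for all `j = 1,…,n`. -/
theorem ST_closedness {n N d : ℕ} (f : Fin N → MvPolynomial (Fin n) ℂ)
    (hf0 : ∀ i, eval (0 : Fin n → ℂ) (f i) = 0)
    (c : (Fin n →₀ ℕ) →₀ ℂ)
    (hord : ∀ α ∈ c.support, degOf α ≤ d) :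
    c ∈ dualSpace (0 : Fin n → ℂ) (Ideal.span (Set.range f)) ↔
      (∀ i, applyF (0 : Fin n → ℂ) c (f i) = 0) ∧
      (∀ j : Fin n, sigmaOp j c ∈ dualSpace (0 : Fin n → ℂ) (Ideal.span (Set.range f))) :=
  ST_closedness_general f c
end

section
/- Let x* be an isolated solution of F(x) = 0 with corank-1 Jacobian A(x*), and let λ ∈ ker A(x*) be nonzero. Then x* is a solution of the augmented system G(x) = (f_1,…,f_N, g_1,…,g_N) = 0 where g_i(x) = Σ_j λ_j ∂f_i/∂x_j, and the multiplicity of x* as a solution of G = 0 is strictly less than its multiplicity as a solution of F = 0, provided the multiplicity of x* in F is at least 2. -/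
open MvPolynomial

/-!
Write `D = ∑ λⱼ ∂ⱼ` and let `I ≤ J` be the ideals generated by `F` and by `G`. By the Leibniz
rule `D I ≤ J`, so the adjoint `σ` of `D` on differential functionals maps `D[J]` into `D[I]`.
Under `Δ_α ↦ x^α / α!` the operator `σ` becomes multiplication by the nonzero linear form
`∑ λⱼ xⱼ`; hence `σ` is injective and its image never contains `Δ₀`, which does lie in `D[I]`
because `x*` is a zero of `F`. If `D[J] = D[I]`, then `σ` would be an injective, hence (finite
dimension) surjective, endomorphism of `D[I]` missing `Δ₀`.
-/

theorem MvPolynomial.pderiv_pderiv_comm {σ R : Type*} [CommSemiring R] (i j : σ)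
    (q : MvPolynomial σ R) : pderiv i (pderiv j q) = pderiv j (pderiv i q) := by
  classical
  induction q using MvPolynomial.induction_on with
  | C a => simp
  | add p q hp hq => simp [hp, hq]
  | mul_X p k hp =>
    simp only [pderiv_mul, pderiv_X, map_add, hp, Pi.single_apply]
    split_ifs <;> simp; ring

theorem MvPolynomial.commute_pderiv_pow {σ R : Type*} [CommSemiring R] (i j : σ) (a b : ℕ) :
    Commute (((pderiv i).toLinearMap : Module.End R (MvPolynomial σ R)) ^ a)
      ((pderiv j).toLinearMap ^ b) :=
  Commute.pow_pow (LinearMap.ext (pderiv_pderiv_comm i j)) a b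

section DiffOp

variable {n : ℕ}

theorem pairwise_commute_pderiv_pow (s : Set (Fin n)) (β : Fin n → ℕ) :
    s.Pairwise (Function.onFun Commute
      fun i => ((pderiv i).toLinearMap : Module.End ℂ (MvPolynomial (Fin n) ℂ)) ^ β i) :=
  fun i _ j _ _ => commute_pderiv_pow i j _ _

theorem diffOp_eq_noncommProd (β : Fin n →₀ ℕ) :
    diffOp β = Finset.univ.noncommProd
      (fun i => ((pderiv i).toLinearMap : Module.End ℂ (MvPolynomial (Fin n) ℂ)) ^ β i)
      (pairwise_commute_pderiv_pow _ β) := by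
  simp [diffOp, Finset.noncommProd]

theorem diffOp_zero : diffOp (0 : Fin n →₀ ℕ) = 1 := by
  simp [diffOp]

theorem diffOp_add (β γ : Fin n →₀ ℕ) : diffOp (β + γ) = diffOp β * diffOp γ := by
  simp only [diffOp_eq_noncommProd]
  rw [← Finset.noncommProd_mul_distrib]
  · exact Finset.noncommProd_congr rfl (fun i _ => by simp [pow_add]) _
  · exact fun i _ j _ _ => commute_pderiv_pow i j _ _

theorem diffOp_single_one (j : Fin n) :
    diffOp (Finsupp.single j 1) = (pderiv (R := ℂ) j).toLinearMap := by
  rw [diffOp_eq_noncommProd, ← Finset.noncommProd_erase_mul _ (Finset.mem_univ j)]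
  convert one_mul ((pderiv (R := ℂ) j).toLinearMap : Module.End ℂ (MvPolynomial (Fin n) ℂ))
    using 2
  · refine (Finset.noncommProd_eq_pow_card _ _ _ 1 fun i hi => ?_).trans (one_pow _)
    simp [Finsupp.single_eq_of_ne (Finset.ne_of_mem_erase hi)]
  · simp

theorem diffOp_add_single_one_apply (α : Fin n →₀ ℕ) (j : Fin n) (q : MvPolynomial (Fin n) ℂ) :
    diffOp (α + Finsupp.single j 1) q = diffOp α (pderiv j q) := by
  rw [diffOp_add, diffOp_single_one]
  rfl

end DiffOp

section DualPairing

variable {n : ℕ}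

theorem prod_factorial_ne_zero (α : Fin n →₀ ℕ) : (∏ i : Fin n, ((α i).factorial : ℂ)) ≠ 0 :=
  Finset.prod_ne_zero_iff.2 fun i _ => Nat.cast_ne_zero.2 (α i).factorial_ne_zero

theorem prod_factorial_add_single_one (α : Fin n →₀ ℕ) (j : Fin n) :
    (∏ i : Fin n, (((α + Finsupp.single j 1 : Fin n →₀ ℕ) i).factorial : ℂ))
      = ((α j : ℂ) + 1) * ∏ i : Fin n, ((α i).factorial : ℂ) := by
  rw [← Finset.mul_prod_erase _ _ (Finset.mem_univ j),
    ← Finset.mul_prod_erase _ _ (Finset.mem_univ j),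
    Finset.prod_congr rfl fun i hi => by
      rw [Finsupp.add_apply, Finsupp.single_eq_of_ne (Finset.ne_of_mem_erase hi), add_zero]]
  simp [Nat.factorial_succ, mul_assoc]

theorem DeltaAt_zero (p : Fin n → ℂ) (q : MvPolynomial (Fin n) ℂ) : DeltaAt p 0 q = eval p q := by
  simp [DeltaAt, diffOp_zero]

theorem DeltaAt_pderiv (p : Fin n → ℂ) (α : Fin n →₀ ℕ) (j : Fin n)
    (q : MvPolynomial (Fin n) ℂ) :
    DeltaAt p α (pderiv j q) = ((α j : ℂ) + 1) * DeltaAt p (α + Finsupp.single j 1) q := by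
  have := prod_factorial_ne_zero α
  have := Nat.cast_add_one_ne_zero (R := ℂ) (α j)
  rw [DeltaAt, DeltaAt, diffOp_add_single_one_apply, prod_factorial_add_single_one]
  field_simp

noncomputable def deltaFunctional (p : Fin n → ℂ) (α : Fin n →₀ ℕ) :
    MvPolynomial (Fin n) ℂ →ₗ[ℂ] ℂ :=
  (∏ i : Fin n, ((α i).factorial : ℂ))⁻¹ • (aeval p).toLinearMap ∘ₗ diffOp α

theorem deltaFunctional_apply (p : Fin n → ℂ) (α : Fin n →₀ ℕ) (q : MvPolynomial (Fin n) ℂ) :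
    deltaFunctional p α q = DeltaAt p α q := by
  simp [deltaFunctional, DeltaAt]

noncomputable def dualPairing (p : Fin n → ℂ) :
    ((Fin n →₀ ℕ) →₀ ℂ) →ₗ[ℂ] MvPolynomial (Fin n) ℂ →ₗ[ℂ] ℂ :=
  Finsupp.lsum ℂ fun α => LinearMap.toSpanSingleton ℂ _ (deltaFunctional p α)

theorem dualPairing_single (p : Fin n → ℂ) (α : Fin n →₀ ℕ) (a : ℂ)
    (q : MvPolynomial (Fin n) ℂ) :
    dualPairing p (Finsupp.single α a) q = a * DeltaAt p α q := by
  simp [dualPairing, deltaFunctional_apply]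

theorem dualPairing_apply (p : Fin n → ℂ) (c : (Fin n →₀ ℕ) →₀ ℂ)
    (q : MvPolynomial (Fin n) ℂ) :
    dualPairing p c q = Finsupp.linearCombination ℂ (fun α => DeltaAt p α q) c := by
  simp [dualPairing, Finsupp.linearCombination_apply, Finsupp.sum, deltaFunctional_apply]

theorem mem_dualSpace {p : Fin n → ℂ} {I : Ideal (MvPolynomial (Fin n) ℂ)}
    {c : (Fin n →₀ ℕ) →₀ ℂ} : c ∈ dualSpace p I ↔ ∀ q ∈ I, dualPairing p c q = 0 := by
  simp [dualSpace, dualPairing_apply]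

theorem dualSpace_anti {p : Fin n → ℂ} {I J : Ideal (MvPolynomial (Fin n) ℂ)} (h : I ≤ J) :
    dualSpace p J ≤ dualSpace p I :=
  fun _ hc => mem_dualSpace.2 fun q hq => mem_dualSpace.1 hc q (h hq)

theorem single_zero_one_mem_dualSpace {p : Fin n → ℂ} {I : Ideal (MvPolynomial (Fin n) ℂ)}
    (hp : ∀ q ∈ I, eval p q = 0) : Finsupp.single 0 1 ∈ dualSpace p I :=
  mem_dualSpace.2 fun q hq => by rw [dualPairing_single, one_mul, DeltaAt_zero, hp q hq]

end DualPairing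

section Shift

variable {n : ℕ}

noncomputable def dualShift (j : Fin n) : ((Fin n →₀ ℕ) →₀ ℂ) →ₗ[ℂ] ((Fin n →₀ ℕ) →₀ ℂ) :=
  Finsupp.lsum ℂ fun α => ((α j : ℂ) + 1) • Finsupp.lsingle (α + Finsupp.single j 1)

theorem dualPairing_dualShift (p : Fin n → ℂ) (j : Fin n) (c : (Fin n →₀ ℕ) →₀ ℂ)
    (q : MvPolynomial (Fin n) ℂ) :
    dualPairing p (dualShift j c) q = dualPairing p c (pderiv j q) := by
  induction c using Finsupp.induction_linear with
  | zero => simp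
  | add c d hc hd => simp only [map_add, LinearMap.add_apply, hc, hd]
  | single α a =>
    rw [dualShift, Finsupp.lsum_single, LinearMap.smul_apply, Finsupp.lsingle_apply, map_smul,
      LinearMap.smul_apply, dualPairing_single, dualPairing_single, DeltaAt_pderiv, smul_eq_mul]
    ring

noncomputable def dirDeriv (v : Fin n → ℂ) :
    Derivation ℂ (MvPolynomial (Fin n) ℂ) (MvPolynomial (Fin n) ℂ) :=
  ∑ j, v j • pderiv j

theorem dirDeriv_apply (v : Fin n → ℂ) (q : MvPolynomial (Fin n) ℂ) :
    dirDeriv v q = ∑ j, C (v j) * pderiv j q := by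
  rw [dirDeriv, ← Derivation.coeFnAddMonoidHom_apply, map_sum, Finset.sum_apply]
  simp [Derivation.coeFnAddMonoidHom_apply, smul_eq_C_mul]

noncomputable def dirShift (v : Fin n → ℂ) : ((Fin n →₀ ℕ) →₀ ℂ) →ₗ[ℂ] ((Fin n →₀ ℕ) →₀ ℂ) :=
  ∑ j, v j • dualShift j

theorem dualPairing_dirShift (p : Fin n → ℂ) (v : Fin n → ℂ) (c : (Fin n →₀ ℕ) →₀ ℂ)
    (q : MvPolynomial (Fin n) ℂ) :
    dualPairing p (dirShift v c) q = dualPairing p c (dirDeriv v q) := by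
  simp [dirShift, dirDeriv_apply, dualPairing_dualShift, ← smul_eq_C_mul]

end Shift

section Embedding

variable {n : ℕ}

noncomputable def dualToPoly : ((Fin n →₀ ℕ) →₀ ℂ) →ₗ[ℂ] MvPolynomial (Fin n) ℂ :=
  Finsupp.lsum ℂ fun α => (∏ i : Fin n, ((α i).factorial : ℂ))⁻¹ • monomial α

theorem coeff_dualToPoly (c : (Fin n →₀ ℕ) →₀ ℂ) (α : Fin n →₀ ℕ) :
    coeff α (dualToPoly c) = (∏ i : Fin n, ((α i).factorial : ℂ))⁻¹ * c α := by
  induction c using Finsupp.induction_linear with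
  | zero => simp
  | add c d hc hd => simp [hc, hd, mul_add]
  | single β a =>
    by_cases h : β = α
    · subst h; simp [dualToPoly]
    · simp [dualToPoly, coeff_monomial, h]

theorem dualToPoly_injective : Function.Injective (dualToPoly (n := n)) := by
  refine (injective_iff_map_eq_zero _).2 fun c hc => Finsupp.ext fun α => ?_
  have h := coeff_dualToPoly c α
  rw [hc, coeff_zero, eq_comm] at h
  exact (mul_eq_zero.1 h).resolve_left (inv_ne_zero (prod_factorial_ne_zero α))

theorem dualToPoly_dualShift (j : Fin n) (c : (Fin n →₀ ℕ) →₀ ℂ) :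
    dualToPoly (dualShift j c) = X j * dualToPoly c := by
  induction c using Finsupp.induction_linear with
  | zero => simp
  | add c d hc hd => simp only [map_add, hc, hd, mul_add]
  | single α a =>
    have := prod_factorial_ne_zero α
    have := Nat.cast_add_one_ne_zero (R := ℂ) (α j)
    simp only [dualShift, dualToPoly, Finsupp.lsum_single, LinearMap.smul_apply,
      Finsupp.lsingle_apply, map_smul, Finsupp.lsum_single]
    rw [prod_factorial_add_single_one, add_comm α, monomial_single_add, pow_one, mul_smul_comm,
      smul_smul]
    congr 1
    field_simp

theorem dualToPoly_dirShift (v : Fin n → ℂ) (c : (Fin n →₀ ℕ) →₀ ℂ) :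
    dualToPoly (dirShift v c) = (∑ j, C (v j) * X j) * dualToPoly c := by
  simp [dirShift, dualToPoly_dualShift, Finset.sum_mul, smul_eq_C_mul, mul_assoc]

theorem sum_C_mul_X_ne_zero {v : Fin n → ℂ} (hv : v ≠ 0) :
    (∑ j, C (v j) * X j : MvPolynomial (Fin n) ℂ) ≠ 0 := by
  obtain ⟨j, hj⟩ := Function.ne_iff.1 hv
  refine fun h => hj ?_
  simpa [coeff_sum, coeff_C_mul, coeff_X, Finsupp.single_left_inj] using
    congrArg (coeff (Finsupp.single j 1)) h

theorem dirShift_injective {v : Fin n → ℂ} (hv : v ≠ 0) : Function.Injective (dirShift v) := by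
  refine (injective_iff_map_eq_zero _).2 fun c hc => dualToPoly_injective ?_
  have h := dualToPoly_dirShift v c
  rw [hc, map_zero, eq_comm, mul_eq_zero] at h
  rw [h.resolve_left (sum_C_mul_X_ne_zero hv), map_zero]

theorem dirShift_apply_zero (v : Fin n → ℂ) (c : (Fin n →₀ ℕ) →₀ ℂ) : dirShift v c 0 = 0 := by
  have h := coeff_dualToPoly (dirShift v c) 0
  simp only [dualToPoly_dirShift, ← constantCoeff_eq, map_mul] at h
  simpa [constantCoeff_X] using h.symm

end Embedding

theorem Derivation.mem_span_union_image {R A : Type*} [CommSemiring R] [CommSemiring A]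
    [Algebra R A] (D : Derivation R A A) {s : Set A} {q : A} (hq : q ∈ Ideal.span s) :
    D q ∈ Ideal.span (s ∪ D '' s) := by
  induction hq using Submodule.span_induction with
  | mem x hx => exact Ideal.subset_span (Or.inr ⟨x, hx, rfl⟩)
  | zero => simp
  | add x y _ _ hx hy => exact (map_add D x y).symm ▸ add_mem hx hy
  | smul r x hx ihx =>
    rw [smul_eq_mul, D.leibniz, smul_eq_mul, smul_eq_mul]
    exact add_mem (Ideal.mul_mem_left _ _ ihx)
      (Ideal.mul_mem_right _ _ (Ideal.span_mono Set.subset_union_left hx))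

section Deflation

variable {n : ℕ} {p v : Fin n → ℂ} {I J : Ideal (MvPolynomial (Fin n) ℂ)}

theorem dirShift_mem_dualSpace (hDJ : ∀ q ∈ I, dirDeriv v q ∈ J) {c : (Fin n →₀ ℕ) →₀ ℂ}
    (hc : c ∈ dualSpace p J) : dirShift v c ∈ dualSpace p I :=
  mem_dualSpace.2 fun q hq => by
    rw [dualPairing_dirShift]
    exact mem_dualSpace.1 hc _ (hDJ q hq)

theorem dualSpace_lt_of_dirDeriv_mem (hp : ∀ q ∈ I, eval p q = 0) (hv : v ≠ 0)
    [FiniteDimensional ℂ (dualSpace p I)] (hIJ : I ≤ J) (hDJ : ∀ q ∈ I, dirDeriv v q ∈ J) :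
    dualSpace p J < dualSpace p I := by
  refine lt_of_le_of_ne (dualSpace_anti hIJ) fun heq => ?_
  have hmaps : ∀ c ∈ dualSpace p I, dirShift v c ∈ dualSpace p I :=
    fun c hc => dirShift_mem_dualSpace hDJ (heq ▸ hc)
  obtain ⟨c, -, hc⟩ := (LinearMap.injOn_iff_surjOn hmaps).1 (dirShift_injective hv).injOn
    (single_zero_one_mem_dualSpace hp)
  simpa [hc] using dirShift_apply_zero v c

end Deflation

theorem first_order_deflation_fixed_multipliers_general {n N : ℕ}
    (f : Fin N → MvPolynomial (Fin n) ℂ) (xs : Fin n → ℂ)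
    (hiso : IsIsolatedSolution xs (Ideal.span (Set.range f)))
    (lam : Fin n → ℂ) (hlam : lam ≠ 0)
    (hker : ∀ i, ∑ j, eval xs (pderiv j (f i)) * lam j = 0)
    (hmult : 2 ≤ Module.finrank ℂ (dualSpace xs (Ideal.span (Set.range f)))) :
    (∀ i, eval xs (∑ j, C (lam j) * pderiv j (f i)) = 0) ∧
    Module.finrank ℂ
        (dualSpace xs (Ideal.span
          (Set.range f ∪ Set.range fun i => ∑ j, C (lam j) * pderiv j (f i))))
      < Module.finrank ℂ (dualSpace xs (Ideal.span (Set.range f))) := by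
  refine ⟨fun i => by simpa [mul_comm] using hker i, ?_⟩
  have : FiniteDimensional ℂ (dualSpace xs (Ideal.span (Set.range f))) :=
    FiniteDimensional.of_finrank_pos (by omega)
  have hg : (fun i => ∑ j, C (lam j) * pderiv j (f i)) = dirDeriv lam ∘ f :=
    funext fun i => (dirDeriv_apply lam (f i)).symm
  rw [hg, Set.range_comp]
  exact Submodule.finrank_lt_finrank_of_lt <| dualSpace_lt_of_dirDeriv_mem hiso.1 hlam
    (Ideal.span_mono Set.subset_union_left) fun _ hq => (dirDeriv lam).mem_span_union_image hq

/-- first-order deflation with fixed multipliers: if `x*` is an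
isolated solution of `F = 0` with corank-1 Jacobian and `0 ≠ λ ∈ ker A(x*)`,
then `x*` solves the augmented system `G = (f₁,…,f_N, g₁,…,g_N)`, where
`g_i = Σ_j λ_j ∂f_i/∂x_j`, and — provided the multiplicity of `x*` in `F = 0`
is at least `2` — the multiplicity of `x*` in `G = 0` is strictly smaller. -/
theorem first_order_deflation_fixed_multipliers {n N : ℕ}
    (f : Fin N → MvPolynomial (Fin n) ℂ) (xs : Fin n → ℂ)
    (hiso : IsIsolatedSolution xs (Ideal.span (Set.range f)))
    (hcorank : (Matrix.rank (Matrix.of fun i : Fin N => fun j : Fin n =>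
        eval xs (pderiv j (f i)))) = n - 1)
    (lam : Fin n → ℂ) (hlam : lam ≠ 0)
    (hker : ∀ i, ∑ j, eval xs (pderiv j (f i)) * lam j = 0)
    (hmult : 2 ≤ Module.finrank ℂ (dualSpace xs (Ideal.span (Set.range f)))) :
    (∀ i, eval xs (∑ j, C (lam j) * pderiv j (f i)) = 0) ∧
    Module.finrank ℂ
        (dualSpace xs (Ideal.span
          (Set.range f ∪ Set.range fun i => ∑ j, C (lam j) * pderiv j (f i))))
      < Module.finrank ℂ (dualSpace xs (Ideal.span (Set.range f))) :=
  first_order_deflation_fixed_multipliers_general f xs hiso lam hlam hker hmult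
end
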